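/- (Proposition 3.2) Let Y be a finite nonempty set, let π_pt and π̃_pt be strictly positive probability distributions on Y with D_KL(π_pt ‖ π̃_pt) ≤ ε, and let r : Y → ℝ be a reward whose exponential satisfies max_y exp(r(y)) ≤ C·Σ_y π_pt(y)·exp(r(y)), where C ≥ 1. Let π_θ(y) = π_pt(y)·exp(r(y))/Z and π̃_θ(y) = π̃_pt(y)·exp(r(y))/Z̃ be the PRT models built from π_pt and π̃_pt respectively (with Z, Z̃ the corresponding normalizations). Then D_KL(π_θ ‖ π̃_θ) ≤ C·ε + C·√(ε/2) + C·√(2ε); in particular D_KL(π_θ ‖ π̃_θ) = O(√ε) as ε → 0, with the implied constant depending only on C. -/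

import Mathlib

open BigOperators

/-- KL divergence of strictly positive finitely supported distributions. -/
noncomputable def KL {Y : Type*} [Fintype Y] (p q : Y → ℝ) : ℝ :=
  ∑ y, p y * Real.log (p y / q y)

-- g t = (t+1) log t - 2(t-1) has derivative log t + 1/t - 1 ≥ 0 on (0,∞)
lemma aux_hasDeriv_g {t : ℝ} (ht : 0 < t) :
    HasDerivAt (fun t : ℝ => (t+1) * Real.log t - 2*(t-1)) (Real.log t + 1/t - 1) t := by
  have h1 : HasDerivAt (fun t : ℝ => (t+1) * Real.log t) (1 * Real.log t + (t+1) * (1/t)) t := by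
    have := ((hasDerivAt_id t).add_const 1).mul (Real.hasDerivAt_log ht.ne')
    exact this.congr_deriv (by simp [one_div])
  have h2 : HasDerivAt (fun t : ℝ => 2*(t-1)) 2 t := by
    simpa using ((hasDerivAt_id t).sub_const 1).const_mul 2
  have := h1.sub h2
  refine this.congr_deriv ?_
  have ht' := ht.ne'
  field_simp
  ring

lemma aux_deriv_g_nonneg {t : ℝ} (ht : 0 < t) : 0 ≤ Real.log t + 1/t - 1 := by
  have := Real.log_le_sub_one_of_pos (x := 1/t) (by positivity)
  have hlog : Real.log (1/t) = - Real.log t := by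
    rw [one_div, Real.log_inv]
  linarith [hlog ▸ this]

lemma aux_g_mono : MonotoneOn (fun t : ℝ => (t+1) * Real.log t - 2*(t-1)) (Set.Ioi 0) := by
  have hderiv : ∀ t ∈ interior (Set.Ioi (0:ℝ)),
      0 ≤ deriv (fun t : ℝ => (t+1) * Real.log t - 2*(t-1)) t := by
    intro t ht
    rw [interior_Ioi] at ht
    rw [(aux_hasDeriv_g ht).deriv]
    exact aux_deriv_g_nonneg ht
  refine monotoneOn_of_deriv_nonneg (convex_Ioi 0) ?_ ?_ hderiv
  · intro t ht
    exact ((aux_hasDeriv_g ht).continuousAt).continuousWithinAt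
  · intro t ht
    rw [interior_Ioi] at ht
    exact (aux_hasDeriv_g ht).differentiableAt.differentiableWithinAt

lemma aux_g_nonneg {t : ℝ} (ht : 1 ≤ t) : 2*(t-1) ≤ (t+1) * Real.log t := by
  have := aux_g_mono (Set.mem_Ioi.2 one_pos) (Set.mem_Ioi.2 (lt_of_lt_of_le one_pos ht)) ht
  simp only [Real.log_one] at this
  linarith

lemma aux_g_nonpos {t : ℝ} (ht0 : 0 < t) (ht : t ≤ 1) : (t+1) * Real.log t ≤ 2*(t-1) := by
  have := aux_g_mono (Set.mem_Ioi.2 ht0) (Set.mem_Ioi.2 one_pos) ht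
  simp only [Real.log_one] at this
  linarith

lemma aux_hasDeriv_h {t : ℝ} (ht : 0 < t) :
    HasDerivAt (fun t : ℝ => 2*(t+2) * (t * Real.log t - t + 1) - 3*(t-1)^2)
      (4*((t+1) * Real.log t - 2*(t-1))) t := by
  have hlog : HasDerivAt (fun t : ℝ => t * Real.log t) (1 * Real.log t + t * t⁻¹) t :=
    (hasDerivAt_id t).mul (Real.hasDerivAt_log ht.ne')
  have h1 : HasDerivAt (fun t : ℝ => 2*(t+2)) 2 t := by
    simpa using ((hasDerivAt_id t).add_const 2).const_mul 2
  have h2 : HasDerivAt (fun t : ℝ => t * Real.log t - t + 1)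
      (1 * Real.log t + t * t⁻¹ - 1) t := by
    simpa using (hlog.sub (hasDerivAt_id t)).add_const 1
  have h3 : HasDerivAt (fun t : ℝ => 3*(t-1)^2) (3*(2*(t-1))) t := by
    simpa using (((hasDerivAt_id t).sub_const 1).pow 2).const_mul 3
  have := (h1.mul h2).sub h3
  refine this.congr_deriv ?_
  have ht' := ht.ne'
  field_simp
  ring

lemma aux_key_t {t : ℝ} (ht : 0 < t) :
    3*(t-1)^2 ≤ 2*(t+2) * (t * Real.log t - t + 1) := by
  set h : ℝ → ℝ := fun t => 2*(t+2) * (t * Real.log t - t + 1) - 3*(t-1)^2 with hh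
  have h1 : h 1 = 0 := by simp [hh]
  have goal : 0 ≤ h t := by
    rcases le_total 1 t with hc | hc
    · have mono : MonotoneOn h (Set.Ici 1) := by
        refine monotoneOn_of_deriv_nonneg (convex_Ici 1) ?_ ?_ ?_
        · intro x hx
          exact ((aux_hasDeriv_h (lt_of_lt_of_le one_pos hx)).continuousAt).continuousWithinAt
        · intro x hx
          rw [interior_Ici] at hx
          exact (aux_hasDeriv_h (lt_trans one_pos hx)).differentiableAt.differentiableWithinAt
        · intro x hx
          rw [interior_Ici] at hx
          rw [(aux_hasDeriv_h (lt_trans one_pos hx)).deriv]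
          have := aux_g_nonneg hx.le
          linarith
      have := mono (Set.mem_Ici.2 le_rfl) (Set.mem_Ici.2 hc) hc
      linarith [h1 ▸ this]
    · have anti : AntitoneOn h (Set.Ioc 0 1) := by
        refine antitoneOn_of_deriv_nonpos (convex_Ioc 0 1) ?_ ?_ ?_
        · intro x hx
          exact ((aux_hasDeriv_h hx.1).continuousAt).continuousWithinAt
        · intro x hx
          rw [interior_Ioc] at hx
          exact (aux_hasDeriv_h hx.1).differentiableAt.differentiableWithinAt
        · intro x hx
          rw [interior_Ioc] at hx
          rw [(aux_hasDeriv_h hx.1).deriv]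
          have := aux_g_nonpos hx.1 hx.2.le
          linarith
      have := anti (Set.mem_Ioc.2 ⟨ht, hc⟩) (Set.mem_Ioc.2 ⟨one_pos, le_rfl⟩) hc
      linarith [h1 ▸ this]
  simp only [hh] at goal
  linarith

/-- pointwise key inequality -/
lemma aux_key_pq {p q : ℝ} (hp : 0 < p) (hq : 0 < q) :
    (p - q) + (3/2) * (p-q)^2 / (p + 2*q) ≤ p * Real.log (p/q) := by
  have ht : 0 < p / q := div_pos hp hq
  have key := aux_key_t ht
  have hlog : Real.log (p/q) = Real.log (p/q) := rfl
  have h1 : 3*((p/q)-1)^2 ≤ 2*((p/q)+2) * ((p/q) * Real.log (p/q) - (p/q) + 1) := key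
  have hq' : q ≠ 0 := hq.ne'
  have hpq : 0 < p + 2*q := by linarith
  set L := Real.log (p/q) with hL
  have h3 := mul_le_mul_of_nonneg_right h1 (sq_nonneg q)
  have e1 : 3*((p/q)-1)^2 * q^2 = 3*(p-q)^2 := by field_simp
  have f1 : ((p/q)+2)*q = p + 2*q := by field_simp
  have f2 : ((p/q)*L - (p/q) + 1)*q = p*L - p + q := by field_simp
  have e2 : 2*((p/q)+2) * ((p/q) * L - (p/q) + 1) * q^2
      = 2*(p+2*q)*(p*L - p + q) := by rw [← f1, ← f2]; ring
  rw [e1, e2] at h3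
  rw [← sub_nonneg]
  have expand : p*L - ((p - q) + (3/2) * (p-q)^2 / (p + 2*q))
      = (2*(p+2*q)*(p*L - p + q) - 3*(p-q)^2) / (2*(p+2*q)) := by
    field_simp
    ring
  rw [expand]
  apply div_nonneg (by linarith) (by linarith)

lemma aux_pinsker {Y : Type*} [Fintype Y] (p q : Y → ℝ)
    (hp : ∀ y, 0 < p y) (hq : ∀ y, 0 < q y)
    (hps : ∑ y, p y = 1) (hqs : ∑ y, q y = 1) :
    (∑ y, |p y - q y|)^2 ≤ 2 * KL p q := by
  set S := ∑ y, (p y - q y)^2 / (p y + 2 * q y) with hS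
  have hKLge : (3/2) * S ≤ KL p q := by
    have hsum : ∑ y, ((p y - q y) + (3/2) * (p y - q y)^2 / (p y + 2 * q y))
        ≤ KL p q := Finset.sum_le_sum fun y _ => aux_key_pq (hp y) (hq y)
    have : ∑ y, ((p y - q y) + (3/2) * (p y - q y)^2 / (p y + 2 * q y))
        = (3/2) * S := by
      rw [Finset.sum_add_distrib, Finset.sum_sub_distrib, hps, hqs, hS, Finset.mul_sum]
      simp [mul_div_assoc]
    linarith [this ▸ hsum]
  have hCS : (∑ y, |p y - q y|)^2 / 3 ≤ S := by
    have h3 : ∑ y, (p y + 2 * q y) = 3 := by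
      rw [Finset.sum_add_distrib, ← Finset.mul_sum, hps, hqs]; norm_num
    have := Finset.sq_sum_div_le_sum_sq_div Finset.univ (fun y => |p y - q y|)
      (g := fun y => p y + 2 * q y) (fun y _ => by have h1 := hp y; have h2 := hq y; show (0:ℝ) < p y + 2 * q y; linarith)
    rw [h3] at this
    simpa [sq_abs] using this
  have h3 : 0 < (3:ℝ) := by norm_num
  rw [div_le_iff₀ h3] at hCS
  linarith

lemma aux_KL_nonneg {Y : Type*} [Fintype Y] (p q : Y → ℝ)
    (hp : ∀ y, 0 < p y) (hq : ∀ y, 0 < q y)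
    (hps : ∑ y, p y = 1) (hqs : ∑ y, q y = 1) : 0 ≤ KL p q := by
  have := aux_pinsker p q hp hq hps hqs
  nlinarith [sq_nonneg (∑ y, |p y - q y|)]

/-- Proposition 3.2: if `D_KL(π_pt ‖ π̃_pt) ≤ ε` and the exponential reward satisfies
`max_y exp(r(y)) ≤ C · ∑ π_pt(y)·exp(r(y))` with `C ≥ 1`, then the corresponding PRT
models are close: `D_KL(π_θ ‖ π̃_θ) ≤ C·ε + C·√(ε/2) + C·√(2ε)`, that is, `O(√ε)`. -/
theorem prt_stability_under_pretrained_replacement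
    {Y : Type*} [Fintype Y] [Nonempty Y]
    (πpt πptNew : Y → ℝ)
    (hpt_pos : ∀ y, 0 < πpt y) (hpt_sum : ∑ y, πpt y = 1)
    (hnew_pos : ∀ y, 0 < πptNew y) (hnew_sum : ∑ y, πptNew y = 1)
    (ε : ℝ) (hKL : KL πpt πptNew ≤ ε)
    (r : Y → ℝ) (C : ℝ) (hC : 1 ≤ C)
    (hmax : ∀ y, Real.exp (r y) ≤ C * ∑ y', πpt y' * Real.exp (r y'))
    (Z Ztil : ℝ)
    (hZ : Z = ∑ y, πpt y * Real.exp (r y))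
    (hZtil : Ztil = ∑ y, πptNew y * Real.exp (r y))
    (πθ πθtil : Y → ℝ)
    (hθ : ∀ y, πθ y = πpt y * Real.exp (r y) / Z)
    (hθtil : ∀ y, πθtil y = πptNew y * Real.exp (r y) / Ztil) :
    KL πθ πθtil ≤ C * ε + C * Real.sqrt (ε / 2) + C * Real.sqrt (2 * ε) := by
  have hexp : ∀ y, 0 < Real.exp (r y) := fun y => Real.exp_pos _
  have hC0 : (0:ℝ) ≤ C := le_trans zero_le_one hC
  have hZpos : 0 < Z := by
    rw [hZ]
    exact Finset.sum_pos (fun y _ => mul_pos (hpt_pos y) (hexp y)) Finset.univ_nonempty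
  have hZtpos : 0 < Ztil := by
    rw [hZtil]
    exact Finset.sum_pos (fun y _ => mul_pos (hnew_pos y) (hexp y)) Finset.univ_nonempty
  have hε0 : 0 ≤ ε :=
    le_trans (aux_KL_nonneg πpt πptNew hpt_pos hnew_pos hpt_sum hnew_sum) hKL
  set δ := ∑ y, |πpt y - πptNew y| with hδdef
  have hδ0 : 0 ≤ δ := Finset.sum_nonneg fun y _ => abs_nonneg _
  have hδ2 : δ^2 ≤ 2*ε := by
    have := aux_pinsker πpt πptNew hpt_pos hnew_pos hpt_sum hnew_sum
    linarith
  have hδle : δ ≤ Real.sqrt (2*ε) := by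
    rw [← Real.sqrt_sq hδ0]
    exact Real.sqrt_le_sqrt hδ2
  have hsqrt_half : Real.sqrt (2*ε) = 2 * Real.sqrt (ε/2) := by
    rw [show (2*ε) = 2^2 * (ε/2) by ring, Real.sqrt_mul (by positivity),
      Real.sqrt_sq (by norm_num : (0:ℝ) ≤ 2)]
  have hθpos : ∀ y, 0 < πθ y := fun y => by
    rw [hθ]; exact div_pos (mul_pos (hpt_pos y) (hexp y)) hZpos
  have hθsum : ∑ y, πθ y = 1 := by
    simp only [hθ]
    rw [← Finset.sum_div, ← hZ, div_self hZpos.ne']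
  have hexpC : ∀ y, Real.exp (r y) ≤ C * Z := fun y => by rw [hZ]; exact hmax y
  have hθle : ∀ y, πθ y ≤ C * πpt y := by
    intro y
    rw [hθ, div_le_iff₀ hZpos]
    calc πpt y * Real.exp (r y) ≤ πpt y * (C * Z) :=
          mul_le_mul_of_nonneg_left (hexpC y) (hpt_pos y).le
      _ = C * πpt y * Z := by ring
  set L : Y → ℝ := fun y => Real.log (πpt y / πptNew y) with hL
  have hKLθ : KL πθ πθtil = (∑ y, πθ y * L y) + (Real.log Ztil - Real.log Z) := by
    have hlogsplit : ∀ y, Real.log (πθ y / πθtil y) = L y + (Real.log Ztil - Real.log Z) := by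
      intro y
      have hratio : πθ y / πθtil y = (πpt y / πptNew y) * (Ztil / Z) := by
        have he := Real.exp_ne_zero (r y)
        have hc : Real.exp (r y) * (Real.exp (r y))⁻¹ = 1 := mul_inv_cancel₀ he
        rw [hθ y, hθtil y]
        field_simp
      rw [hratio, Real.log_mul (div_pos (hpt_pos y) (hnew_pos y)).ne'
        (div_pos hZtpos hZpos).ne', Real.log_div hZtpos.ne' hZpos.ne']
    unfold KL
    calc ∑ y, πθ y * Real.log (πθ y / πθtil y)
        = ∑ y, (πθ y * L y + πθ y * (Real.log Ztil - Real.log Z)) := by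
          refine Finset.sum_congr rfl fun y _ => ?_
          rw [hlogsplit y]; ring
      _ = (∑ y, πθ y * L y) + (∑ y, πθ y) * (Real.log Ztil - Real.log Z) := by
          rw [Finset.sum_add_distrib, ← Finset.sum_mul]
      _ = (∑ y, πθ y * L y) + (Real.log Ztil - Real.log Z) := by
          rw [hθsum, one_mul]
  -- Term A
  have habs_sum : ∑ y, max (πptNew y - πpt y) 0 = δ / 2 := by
    have : ∀ y, max (πptNew y - πpt y) 0
        = ((πptNew y - πpt y) + |πpt y - πptNew y|) / 2 := by
      intro y
      rw [abs_sub_comm]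
      rcases le_total 0 (πptNew y - πpt y) with h | h
      · rw [max_eq_left h, abs_of_nonneg h]; ring
      · rw [max_eq_right h, abs_of_nonpos h]; ring
    rw [Finset.sum_congr rfl fun y _ => this y]
    rw [← Finset.sum_div, Finset.sum_add_distrib, Finset.sum_sub_distrib,
      hpt_sum, hnew_sum, ← hδdef]
    ring
  have hptmax : ∀ y, πpt y * max (-(L y)) 0 ≤ max (πptNew y - πpt y) 0 := by
    intro y
    rcases le_total (L y) 0 with h | h
    · have hnegL : -(L y) = Real.log (πptNew y / πpt y) := by
        rw [hL]
        rw [← Real.log_inv, inv_div]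
      have hb := Real.log_le_sub_one_of_pos (div_pos (hnew_pos y) (hpt_pos y))
      have : πpt y * (-(L y)) ≤ πptNew y - πpt y := by
        rw [hnegL]
        have := mul_le_mul_of_nonneg_left hb (hpt_pos y).le
        rw [mul_sub, mul_div_cancel₀ _ (hpt_pos y).ne', mul_one] at this
        linarith
      rw [max_eq_left (by linarith)]
      exact le_trans this (le_max_left _ _)
    · rw [max_eq_right (by linarith)]
      simp [le_max_right]
  have hmaxL : ∀ y, max (L y) 0 = L y + max (-(L y)) 0 := by
    intro y
    rcases le_total (L y) 0 with h | h
    · rw [max_eq_right h, max_eq_left (by linarith)]; ring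
    · rw [max_eq_left h, max_eq_right (by linarith)]; ring
  have hA : (∑ y, πθ y * L y) ≤ C * ε + C * Real.sqrt (ε/2) := by
    have step1 : (∑ y, πθ y * L y) ≤ ∑ y, C * (πpt y * max (L y) 0) := by
      refine Finset.sum_le_sum fun y _ => ?_
      rcases le_total 0 (L y) with h | h
      · rw [max_eq_left h]
        calc πθ y * L y ≤ (C * πpt y) * L y := mul_le_mul_of_nonneg_right (hθle y) h
          _ = C * (πpt y * L y) := by ring
      · have h1 : πθ y * L y ≤ 0 := mul_nonpos_of_nonneg_of_nonpos (hθpos y).le h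
        have h2 : 0 ≤ C * (πpt y * max (L y) 0) :=
          mul_nonneg hC0 (mul_nonneg (hpt_pos y).le (le_max_right _ _))
        linarith
    have step2 : ∑ y, πpt y * max (L y) 0 ≤ ε + δ/2 := by
      have : ∀ y, πpt y * max (L y) 0 ≤ πpt y * L y + max (πptNew y - πpt y) 0 := by
        intro y
        rw [hmaxL y, mul_add]
        exact add_le_add_right (hptmax y) _
      calc ∑ y, πpt y * max (L y) 0
          ≤ ∑ y, (πpt y * L y + max (πptNew y - πpt y) 0) := Finset.sum_le_sum fun y _ => this y
        _ = (∑ y, πpt y * L y) + ∑ y, max (πptNew y - πpt y) 0 := Finset.sum_add_distrib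
        _ ≤ ε + δ/2 := by
            rw [habs_sum]
            have : (∑ y, πpt y * L y) = KL πpt πptNew := rfl
            rw [this]
            linarith
    have hhalf : δ/2 ≤ Real.sqrt (ε/2) := by
      rw [hsqrt_half] at hδle
      linarith
    calc (∑ y, πθ y * L y) ≤ ∑ y, C * (πpt y * max (L y) 0) := step1
      _ = C * ∑ y, πpt y * max (L y) 0 := by rw [Finset.mul_sum]
      _ ≤ C * (ε + δ/2) := mul_le_mul_of_nonneg_left step2 hC0
      _ ≤ C * (ε + Real.sqrt (ε/2)) := mul_le_mul_of_nonneg_left (by linarith) hC0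
      _ = C * ε + C * Real.sqrt (ε/2) := by ring
  -- Term B
  have hB : Real.log Ztil - Real.log Z ≤ C * Real.sqrt (2*ε) := by
    have h1 : Real.log Ztil - Real.log Z = Real.log (Ztil / Z) :=
      (Real.log_div hZtpos.ne' hZpos.ne').symm
    have h2 : Real.log (Ztil/Z) ≤ Ztil/Z - 1 :=
      Real.log_le_sub_one_of_pos (div_pos hZtpos hZpos)
    have h3 : Ztil - Z ≤ (C * Z) * δ := by
      have hdiff : Ztil - Z = ∑ y, (πptNew y - πpt y) * Real.exp (r y) := by
        rw [hZtil, hZ, ← Finset.sum_sub_distrib]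
        exact Finset.sum_congr rfl fun y _ => by ring
      rw [hdiff, hδdef, Finset.mul_sum]
      refine Finset.sum_le_sum fun y _ => ?_
      calc (πptNew y - πpt y) * Real.exp (r y)
          ≤ |πptNew y - πpt y| * Real.exp (r y) :=
            mul_le_mul_of_nonneg_right (le_abs_self _) (hexp y).le
        _ = |πpt y - πptNew y| * Real.exp (r y) := by rw [abs_sub_comm]
        _ ≤ |πpt y - πptNew y| * (C * Z) :=
            mul_le_mul_of_nonneg_left (hexpC y) (abs_nonneg _)
        _ = C * Z * |πpt y - πptNew y| := by ring
    have h4 : Ztil/Z - 1 ≤ C * δ := by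
      rw [div_sub_one hZpos.ne', div_le_iff₀ hZpos]
      calc Ztil - Z ≤ (C * Z) * δ := h3
        _ = C * δ * Z := by ring
    calc Real.log Ztil - Real.log Z ≤ Ztil/Z - 1 := by rw [h1]; exact h2
      _ ≤ C * δ := h4
      _ ≤ C * Real.sqrt (2*ε) := mul_le_mul_of_nonneg_left hδle hC0
  rw [hKLθ]
  linarith
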